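/- arXiv:2309.10286 — 3 statements merged into one kernel-verified Lean document; each statement's English description precedes it below -/
import Mathlib

section
/- For every real c ≥ 1 and every real x ≥ 2, we have 0 ≤ e^{−1/c} − (1 − 1/(cx))^x ≤ A/x, where A = 5·e^{−1/c}/c². -/
/-!
Write `(1 - s/x)^x = exp (x log (1 - s/x))` and sandwich the logarithm between
`1 - u⁻¹ ≤ log u ≤ u - 1`: this gives `x log (1 - s/x) ∈ [-s - s²/(x - s), -s]`, and `1 - v ≤ exp (-v)`
turns the lower bound into `(1 - s/x)^x ≥ exp (-s) (1 - s²/(x - s))`. For `s = 1/c` and `x ≥ 2`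
the error `s²/(x - s)` is at most `5/(c² x)`.
-/

open Real

namespace Real

variable {s x : ℝ}

lemma one_sub_div_pos_of_lt (hx : 0 < x) (hsx : s < x) : 0 < 1 - s / x :=
  sub_pos.mpr ((div_lt_one hx).mpr hsx)

lemma one_sub_div_rpow_eq_exp (hx : 0 < x) (hsx : s < x) :
    (1 - s / x) ^ x = exp (x * log (1 - s / x)) := by
  rw [rpow_def_of_pos (one_sub_div_pos_of_lt hx hsx), mul_comm]

lemma mul_log_one_sub_div_le_neg (hx : 0 < x) (hsx : s < x) : x * log (1 - s / x) ≤ -s := by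
  have hlog : log (1 - s / x) ≤ -(s / x) := by
    linarith [log_le_sub_one_of_pos (one_sub_div_pos_of_lt hx hsx)]
  calc x * log (1 - s / x) ≤ x * -(s / x) := by gcongr
    _ = -s := by field_simp

lemma neg_sub_sq_div_le_mul_log_one_sub_div (hx : 0 < x) (hsx : s < x) :
    -s - s ^ 2 / (x - s) ≤ x * log (1 - s / x) := by
  have hxs : 0 < x - s := sub_pos.mpr hsx
  have hbase : 1 - s / x = (x - s) / x := by field_simp
  have hlog : 1 - ((x - s) / x)⁻¹ ≤ log ((x - s) / x) := one_sub_inv_le_log_of_pos (by positivity)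
  rw [hbase]
  calc -s - s ^ 2 / (x - s) = x * (1 - ((x - s) / x)⁻¹) := by field_simp; ring
    _ ≤ x * log ((x - s) / x) := by gcongr

lemma one_sub_div_rpow_le_exp_neg (hx : 0 < x) (hsx : s < x) : (1 - s / x) ^ x ≤ exp (-s) := by
  rw [one_sub_div_rpow_eq_exp hx hsx]
  exact exp_le_exp.mpr (mul_log_one_sub_div_le_neg hx hsx)

lemma exp_neg_sub_one_sub_div_rpow_le (hx : 0 < x) (hsx : s < x) :
    exp (-s) - (1 - s / x) ^ x ≤ exp (-s) * (s ^ 2 / (x - s)) := by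
  set ε := s ^ 2 / (x - s)
  have hlower : exp (-s) * (1 - ε) ≤ (1 - s / x) ^ x :=
    calc exp (-s) * (1 - ε) ≤ exp (-s) * exp (-ε) := by gcongr; exact one_sub_le_exp_neg ε
      _ = exp (-s - ε) := by rw [← exp_add]; ring_nf
      _ ≤ exp (x * log (1 - s / x)) := exp_le_exp.mpr (neg_sub_sq_div_le_mul_log_one_sub_div hx hsx)
      _ = (1 - s / x) ^ x := (one_sub_div_rpow_eq_exp hx hsx).symm
  linarith

end Real

theorem exp_sub_rpow_bound (c x : ℝ) (hc : 1 ≤ c) (hx : 2 ≤ x) :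
    0 ≤ exp (-1/c) - (1 - 1/(c*x)) ^ x ∧
    exp (-1/c) - (1 - 1/(c*x)) ^ x ≤ (5 * exp (-1/c) / c^2) / x := by
  have hc0 : 0 < c := by linarith
  have hx0 : 0 < x := by linarith
  have hsx : 1 / c < x := by rw [div_lt_iff₀ hc0]; nlinarith
  have hbase : 1 - 1 / (c * x) = 1 - 1 / c / x := by rw [div_div]
  rw [hbase, neg_div]
  refine ⟨sub_nonneg.mpr (one_sub_div_rpow_le_exp_neg hx0 hsx), ?_⟩
  refine (exp_neg_sub_one_sub_div_rpow_le hx0 hsx).trans ?_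
  have herr : (1 / c) ^ 2 / (x - 1 / c) ≤ 5 / c ^ 2 / x := by
    have hcx : 1 ≤ c * x - 1 := by nlinarith
    calc (1 / c) ^ 2 / (x - 1 / c) = 1 / (c * (c * x - 1)) := by field_simp
      _ ≤ 5 / c ^ 2 / x := by rw [div_div, div_le_div_iff₀ (by positivity) (by positivity)]; nlinarith
  calc exp (-(1 / c)) * ((1 / c) ^ 2 / (x - 1 / c)) ≤ exp (-(1 / c)) * (5 / c ^ 2 / x) := by gcongr
    _ = 5 * exp (-(1 / c)) / c ^ 2 / x := by ring
end

section
/- Let α ∈ (1, 2], c ≥ 1 a real constant, and define Δ(d) = P(d, 1/(cd)) − P(d, α^{−1/2}/(cd)) where P(d, p) = 1 − (1 − p)^d. Then for all integers d ≥ 2, Δ(d) ≥ (e^{−1/c} − A/(d − 1))·(1 − α^{−1/2})/c, where A = 5e^{−1/c}/c². In particular, Δ(d) is bounded below by a positive constant independent of d for all sufficiently large d. -/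
/-!
With `q = α^(-1/2) < 1`, the difference is `x^d - y^d` for `x = 1 - q/(cd) ≥ y = 1 - 1/(cd) ≥ 0`.
Comparing each term of the geometric sum `x^d - y^d = (x - y) ∑ x^i y^(d-1-i)` with `y^(d-1)`
gives `x^d - y^d ≥ d (x - y) y^(d-1) = (1 - q)/c · y^(d-1)`, and `y^(d-1) ≥ e^(-1/c)` because
`e^(-1/(c(d-1))) ≤ 1 - 1/(c(d-1) + 1) ≤ 1 - 1/(cd)` when `c ≥ 1`. So `Δ(d)` is in fact bounded
below by `e^(-1/c)(1 - q)/c` for every `d ≥ 1`, which gives both claims.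
-/

open Real Finset

theorem mul_sub_mul_pow_le_pow_sub_pow {R : Type*} [CommRing R] [PartialOrder R]
    [IsOrderedRing R] {x y : R} (hy : 0 ≤ y) (hyx : y ≤ x) (n : ℕ) :
    n * (x - y) * y ^ (n - 1) ≤ x ^ n - y ^ n := by
  have hterm : ∀ i ∈ range n, y ^ (n - 1) ≤ x ^ i * y ^ (n - 1 - i) := fun i hi => by
    calc y ^ (n - 1) = y ^ i * y ^ (n - 1 - i) := by
          rw [← pow_add, Nat.add_sub_cancel' (Nat.le_sub_one_of_lt (mem_range.1 hi))]
      _ ≤ x ^ i * y ^ (n - 1 - i) := by gcongr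
  calc n * (x - y) * y ^ (n - 1) = (∑ _i ∈ range n, y ^ (n - 1)) * (x - y) := by
        rw [sum_const, card_range, nsmul_eq_mul]; ring
    _ ≤ (∑ i ∈ range n, x ^ i * y ^ (n - 1 - i)) * (x - y) :=
        mul_le_mul_of_nonneg_right (sum_le_sum hterm) (sub_nonneg.2 hyx)
    _ = x ^ n - y ^ n := geom_sum₂_mul x y n

theorem exp_neg_inv_le_one_sub_inv_add_one {u : ℝ} (hu : 0 < u) :
    exp (-(1 / u)) ≤ 1 - 1 / (u + 1) := by
  rw [exp_neg, show 1 - 1 / (u + 1) = (1 + 1 / u)⁻¹ by field_simp; ring]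
  exact inv_anti₀ (by positivity) (by linarith [add_one_le_exp (1 / u)])

theorem exp_neg_inv_le_one_sub_pow {c : ℝ} (hc : 1 ≤ c) (d : ℕ) :
    exp (-1 / c) ≤ (1 - 1 / (c * d)) ^ (d - 1) := by
  rcases Nat.lt_or_ge d 2 with hd | hd
  · rw [Nat.sub_eq_zero_of_le (by omega), pow_zero, exp_le_one_iff]
    exact div_nonpos_of_nonpos_of_nonneg (by norm_num) (by linarith)
  obtain ⟨n, rfl⟩ := Nat.exists_eq_add_of_le' hd
  have hcn : 0 < c * (n + 1) := by positivity
  push_cast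
  calc exp (-1 / c) = exp (-(1 / (c * (n + 1)))) ^ (n + 1) := by
        rw [← exp_nat_mul]; push_cast; congr 1; field_simp
    _ ≤ (1 - 1 / (c * (n + 1) + 1)) ^ (n + 1) := by
        gcongr; exact exp_neg_inv_le_one_sub_inv_add_one hcn
    _ ≤ (1 - 1 / (c * (n + 2))) ^ (n + 1) := by
        have := (exp_pos _).le.trans (exp_neg_inv_le_one_sub_inv_add_one hcn)
        gcongr
        linarith

theorem exp_neg_inv_mul_le_pow_sub_pow {c q : ℝ} (hc : 1 ≤ c) (hq : q ≤ 1) {d : ℕ}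
    (hd : 1 ≤ d) :
    exp (-1 / c) * (1 - q) / c ≤ (1 - q / (c * d)) ^ d - (1 - 1 / (c * d)) ^ d := by
  have hc0 : 0 < c := by linarith
  have hcd : 1 ≤ c * d := one_le_mul_of_one_le_of_one_le hc (by exact_mod_cast hd)
  have hy : 0 ≤ 1 - 1 / (c * d) := by rw [sub_nonneg, div_le_one (by linarith)]; exact hcd
  have hyx : 1 - 1 / (c * d) ≤ 1 - q / (c * d) := by gcongr
  calc exp (-1 / c) * (1 - q) / c ≤ (1 - q) / c * (1 - 1 / (c * d)) ^ (d - 1) := by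
        rw [mul_div_assoc, mul_comm]
        exact mul_le_mul_of_nonneg_left (exp_neg_inv_le_one_sub_pow hc d)
          (div_nonneg (by linarith) hc0.le)
    _ = d * ((1 - q / (c * d)) - (1 - 1 / (c * d))) * (1 - 1 / (c * d)) ^ (d - 1) := by
        have : (d : ℝ) ≠ 0 := by positivity
        field_simp
        ring
    _ ≤ (1 - q / (c * d)) ^ d - (1 - 1 / (c * d)) ^ d := mul_sub_mul_pow_le_pow_sub_pow hy hyx d

theorem Delta_lower_bound_general (α c : ℝ) (hα1 : 1 < α) (hc : 1 ≤ c) :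
    (∀ d : ℕ, 2 ≤ d →
      (1 - (1 - 1 / (c * d)) ^ d) - (1 - (1 - α ^ (-(1:ℝ)/2) / (c * d)) ^ d)
        ≥ (exp (-1/c) - (5 * exp (-1/c) / c^2) / ((d : ℝ) - 1)) * (1 - α ^ (-(1:ℝ)/2)) / c) ∧
    ∃ ε : ℝ, 0 < ε ∧ ∃ D : ℕ, ∀ d : ℕ, D ≤ d →
      ε ≤ (1 - (1 - 1 / (c * d)) ^ d) - (1 - (1 - α ^ (-(1:ℝ)/2) / (c * d)) ^ d) := by
  set q := α ^ (-(1:ℝ)/2)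
  have hq : q < 1 := rpow_lt_one_of_one_lt_of_neg hα1 (by norm_num)
  have hΔ (d : ℕ) (hd : 1 ≤ d) :
      exp (-1 / c) * (1 - q) / c ≤ (1 - (1 - 1 / (c * d)) ^ d) - (1 - (1 - q / (c * d)) ^ d) := by
    linarith [exp_neg_inv_mul_le_pow_sub_pow hc hq.le hd]
  refine ⟨fun d hd => le_trans ?_ (hΔ d (by omega)), _, ?_, 1, hΔ⟩
  · have : (2 : ℝ) ≤ d := by exact_mod_cast hd
    have : 0 ≤ 5 * exp (-1 / c) / c ^ 2 / ((d : ℝ) - 1) :=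
      div_nonneg (by positivity) (by linarith)
    have : 0 ≤ 1 - q := by linarith
    gcongr
    linarith
  · exact div_pos (mul_pos (exp_pos _) (by linarith)) (by linarith)

theorem Delta_lower_bound (α c : ℝ) (hα1 : 1 < α) (hα2 : α ≤ 2) (hc : 1 ≤ c) :
    (∀ d : ℕ, 2 ≤ d →
      (1 - (1 - 1 / (c * d)) ^ d) - (1 - (1 - α ^ (-(1:ℝ)/2) / (c * d)) ^ d)
        ≥ (exp (-1/c) - (5 * exp (-1/c) / c^2) / ((d : ℝ) - 1)) * (1 - α ^ (-(1:ℝ)/2)) / c) ∧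
    ∃ ε : ℝ, 0 < ε ∧ ∃ D : ℕ, ∀ d : ℕ, D ≤ d →
      ε ≤ (1 - (1 - 1 / (c * d)) ^ d) - (1 - (1 - α ^ (-(1:ℝ)/2) / (c * d)) ^ d) :=
  Delta_lower_bound_general α c hα1 hc
end

section
/- Let λ ≥ 1 be an integer, 1 < α ≤ 2, and set c = 2λ/(1 − α^{−1/4}). Define P_λ(d, p) = ∑_{i=λ}^{d} C(d, i)p^i(1−p)^{d−i}. Then for every integer d and every real x with 0 ≤ x ≤ λ/(c·d) and α^{1/4}x ≤ 1, each term ratio satisfies C(d, λ+j)x^{λ+j}(1−x)^{d−λ−j} ≤ α^{−(λ−1)/4}·C(d, λ+j)(α^{1/4}x)^{λ+j}(1−α^{1/4}x)^{d−λ−j} for all 0 ≤ j ≤ d−λ, and hence P_λ(d, x) ≤ α^{−(λ−1)/4}·P_λ(d, α^{1/4}x). -/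
/-!
Write `t = α^{1/4}`. The hypothesis on `x` gives `d t x ≤ 1 - t⁻¹` (this is where `α ≤ 2`, i.e.
`t ≤ 2`, enters), so Bernoulli's inequality yields `(1 - x)^m (1 - t⁻¹) ≤ (1 - x)^m (1 - t x)^m
≤ (1 - t x)^m` for every `m ≤ d`, i.e. `(1 - x)^m ≤ t (1 - t x)^m`. The remaining factor `t` is
absorbed by `α^{-(λ-1)/4} t^k = t^{k-λ+1} ≥ t` for `k ≥ λ`, which bounds every term of the
binomial tail, and summing gives the bound on `P_λ`.
-/

open Real Finset

theorem one_sub_pow_le_mul_one_sub_mul_pow {t x : ℝ} {m : ℕ} (hx : 0 ≤ x) (ht : 1 ≤ t)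
    (htx : t * x ≤ 1) (hm : m * (t * x) ≤ 1 - t⁻¹) :
    (1 - x) ^ m ≤ t * (1 - t * x) ^ m := by
  have hx1 : x ≤ 1 := by nlinarith
  have hbernoulli : 1 + m * -(t * x) ≤ (1 - t * x) ^ m := by
    simpa [sub_eq_add_neg] using one_add_mul_le_pow (a := -(t * x)) (by linarith) m
  have hpow : (1 - x) ^ m ≤ 1 := pow_le_one₀ (by linarith) (by linarith)
  have hpow0 : 0 ≤ (1 - x) ^ m := pow_nonneg (by linarith) m
  have h : (1 - x) ^ m * t⁻¹ ≤ (1 - t * x) ^ m :=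
    calc (1 - x) ^ m * t⁻¹ ≤ (1 - x) ^ m * (1 + m * -(t * x)) := by gcongr; linarith
      _ ≤ (1 - x) ^ m * (1 - t * x) ^ m := by gcongr
      _ ≤ (1 - t * x) ^ m := mul_le_of_le_one_left (pow_nonneg (by linarith) m) hpow
  have ht0 : 0 < t := by linarith
  calc (1 - x) ^ m = t * ((1 - x) ^ m * t⁻¹) := by field_simp
    _ ≤ t * (1 - t * x) ^ m := by gcongr

theorem mul_pow_mul_one_sub_pow_le {t x s C : ℝ} {k m : ℕ} (hC : 0 ≤ C) (hx : 0 ≤ x)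
    (ht : 1 ≤ t) (htx : t * x ≤ 1) (hm : m * (t * x) ≤ 1 - t⁻¹) (hs : t ≤ s * t ^ k) :
    C * x ^ k * (1 - x) ^ m ≤ s * (C * (t * x) ^ k * (1 - t * x) ^ m) := by
  have h1tx : 0 ≤ 1 - t * x := by linarith
  calc C * x ^ k * (1 - x) ^ m ≤ C * x ^ k * (t * (1 - t * x) ^ m) := by
        gcongr; exact one_sub_pow_le_mul_one_sub_mul_pow hx ht htx hm
    _ ≤ C * x ^ k * (s * t ^ k * (1 - t * x) ^ m) := by gcongr
    _ = s * (C * (t * x) ^ k * (1 - t * x) ^ m) := by ring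

theorem rpow_quarter_le_rpow_mul_pow {α : ℝ} (hα : 1 ≤ α) {l k : ℕ} (hlk : l ≤ k) :
    α ^ ((1 : ℝ) / 4) ≤ α ^ (-((l : ℝ) - 1) / 4) * (α ^ ((1 : ℝ) / 4)) ^ k := by
  have hα0 : 0 < α := by linarith
  rw [← rpow_natCast, ← rpow_mul hα0.le, ← rpow_add hα0]
  have hlk' : (l : ℝ) ≤ k := by exact_mod_cast hlk
  exact rpow_le_rpow_of_exponent_le hα (by linarith)

theorem mul_mul_le_of_le_div {l s t x d : ℝ} (hs : 0 ≤ s) (ht : t ≤ 2) (hx : 0 ≤ x)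
    (hd : 0 ≤ d) (hxl : x ≤ l / (2 * l / s * d)) :
    d * (t * x) ≤ s := by
  rcases eq_or_ne l 0 with rfl | hl
  · have hx0 : x = 0 := le_antisymm (by simpa using hxl) hx
    simp [hx0, hs]
  have hdx : d * x ≤ s / 2 := by
    rcases eq_or_lt_of_le hd with rfl | hd0
    · linarith
    have hxs : x ≤ s / (2 * d) := by
      rwa [show l / (2 * l / s * d) = s / (2 * d) by field_simp] at hxl
    calc d * x ≤ d * (s / (2 * d)) := by gcongr
      _ = s / 2 := by field_simp
  nlinarith [mul_nonneg hd hx]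

theorem Plambda_query_amplification_general (lam : ℕ)
    (α : ℝ) (hα1 : 1 < α) (hα2 : α ≤ 2)
    (c : ℝ) (hc : c = 2 * lam / (1 - α ^ (-(1:ℝ)/4)))
    (d : ℕ) (x : ℝ) (hx0 : 0 ≤ x) (hx : x ≤ lam / (c * d))
    (hx1 : α ^ ((1:ℝ)/4) * x ≤ 1) :
    (∀ j : ℕ, j ≤ d - lam →
      (Nat.choose d (lam + j) : ℝ) * x ^ (lam + j) * (1 - x) ^ (d - lam - j)
        ≤ α ^ (-((lam : ℝ) - 1)/4) *
          ((Nat.choose d (lam + j) : ℝ) * (α ^ ((1:ℝ)/4) * x) ^ (lam + j)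
            * (1 - α ^ ((1:ℝ)/4) * x) ^ (d - lam - j))) ∧
    (∑ i ∈ Finset.Icc lam d, (Nat.choose d i : ℝ) * x ^ i * (1 - x) ^ (d - i))
      ≤ α ^ (-((lam : ℝ) - 1)/4) *
        ∑ i ∈ Finset.Icc lam d,
          (Nat.choose d i : ℝ) * (α ^ ((1:ℝ)/4) * x) ^ i * (1 - α ^ ((1:ℝ)/4) * x) ^ (d - i) := by
  set t := α ^ ((1:ℝ)/4)
  have ht1 : 1 ≤ t := one_le_rpow hα1.le (by norm_num)
  have ht2 : t ≤ 2 := by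
    have : t ≤ α ^ (1:ℝ) := rpow_le_rpow_of_exponent_le hα1.le (by norm_num)
    rw [rpow_one] at this
    linarith
  have hinv : α ^ (-(1:ℝ)/4) = t⁻¹ := by rw [neg_div, rpow_neg (by linarith)]
  have hdtx : (d : ℝ) * (t * x) ≤ 1 - t⁻¹ := by
    rw [hc, hinv] at hx
    exact mul_mul_le_of_le_div (by simp [inv_le_one_of_one_le₀ ht1]) ht2 hx0 d.cast_nonneg hx
  have hterm : ∀ k m : ℕ, lam ≤ k → m ≤ d →
      (Nat.choose d k : ℝ) * x ^ k * (1 - x) ^ m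
        ≤ α ^ (-((lam : ℝ) - 1)/4) * ((Nat.choose d k : ℝ) * (t * x) ^ k * (1 - t * x) ^ m) :=
    fun k m hk hm => mul_pow_mul_one_sub_pow_le (Nat.cast_nonneg _) hx0 ht1 hx1
      (le_trans (by gcongr) hdtx) (rpow_quarter_le_rpow_mul_pow hα1.le hk)
  refine ⟨fun j _ => hterm _ _ (Nat.le_add_right _ _) (by omega), ?_⟩
  rw [mul_sum]
  exact sum_le_sum fun i hi => hterm i (d - i) (mem_Icc.mp hi).1 (Nat.sub_le _ _)

theorem Plambda_query_amplification (lam : ℕ) (hlam : 1 ≤ lam)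
    (α : ℝ) (hα1 : 1 < α) (hα2 : α ≤ 2)
    (c : ℝ) (hc : c = 2 * lam / (1 - α ^ (-(1:ℝ)/4)))
    (d : ℕ) (hld : lam ≤ d) (x : ℝ) (hx0 : 0 ≤ x) (hx : x ≤ lam / (c * d))
    (hx1 : α ^ ((1:ℝ)/4) * x ≤ 1) :
    (∀ j : ℕ, j ≤ d - lam →
      (Nat.choose d (lam + j) : ℝ) * x ^ (lam + j) * (1 - x) ^ (d - lam - j)
        ≤ α ^ (-((lam : ℝ) - 1)/4) *
          ((Nat.choose d (lam + j) : ℝ) * (α ^ ((1:ℝ)/4) * x) ^ (lam + j)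
            * (1 - α ^ ((1:ℝ)/4) * x) ^ (d - lam - j))) ∧
    (∑ i ∈ Finset.Icc lam d, (Nat.choose d i : ℝ) * x ^ i * (1 - x) ^ (d - i))
      ≤ α ^ (-((lam : ℝ) - 1)/4) *
        ∑ i ∈ Finset.Icc lam d,
          (Nat.choose d i : ℝ) * (α ^ ((1:ℝ)/4) * x) ^ i * (1 - α ^ ((1:ℝ)/4) * x) ^ (d - i) :=
  Plambda_query_amplification_general lam α hα1 hα2 c hc d x hx0 hx hx1
end
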